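/- Let P be a substochastic irreducible matrix on a countably infinite set Λ. Set δ := Σ_{z∈Λ} inf_{x∈Λ} P(x,z) and c := sup_{x∈Λ} (1 − Σ_{y∈Λ} P(x,y)). If δ > c, then P is aperiodic and R-positive, where R is its decay parameter; moreover there exist strictly positive functions ν, μ : Λ → (0,∞) with Σ_{x∈Λ} ν(x)P(x,y) = R ν(y) for all y ∈ Λ, Σ_{y∈Λ} P(x,y)μ(y) = R μ(x) for all x ∈ Λ, Σ_{x∈Λ} ν(x) < ∞, and 0 < inf_{x∈Λ} μ(x) ≤ sup_{x∈Λ} μ(x) < ∞. (This is the discrete-skeleton form of the paper's Theorem 2.3: a Doeblin-type condition α > C implies R-positivity with a bounded right eigenvector bounded away from 0 and a summable left eigenvector.) -/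

import Mathlib

/-!
Let `p y = ⨅ x, P x y`, of total mass `δ`, and split `P x y = Q x y + p y`. The rows of `Q` sum to
at most `1 - δ`, so for `r > 1 - δ` the resolvents `(r - Q)⁻¹ 1` and `p (r - Q)⁻¹` are convergent
Neumann series, and `F r = p (r - Q)⁻¹ 1` is continuous. Since `F 1 ≤ 1 ≤ F (max (1 - c) δ)`, some
`R ∈ [max (1 - c) δ, 1]` has `F R = 1`; then `μ = (R - Q)⁻¹ 1` and `ν = p (R - Q)⁻¹` are right and
left `R`-eigenvectors of `P`, with `1 ≤ μ ≤ (R - 1 + δ)⁻¹` and `ν` summable.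

The Doob transform `S x y = P x y * μ y / (R * μ x)` is then stochastic and still dominates a
positive multiple of `p`, so Doeblin's contraction makes the oscillation of every column of `Sⁿ`
decay geometrically: `Sⁿ x y` converges to a limit independent of `x`, which irreducibility makes
positive. Since `Sⁿ x x = Pⁿ x x / Rⁿ`, this is `R`-positivity, and it also gives aperiodicity
and `(Pⁿ x x) ^ (1 / n) → R`.
-/

open Filter Topology

/-- Powers of a matrix indexed by a countable set: `matPow P 0 = Id`,
`matPow P (n+1) x y = ∑ z, matPow P n x z * P z y`. -/
noncomputable def matPow {Λ : Type*} [DecidableEq Λ] (P : Λ → Λ → ℝ) : ℕ → Λ → Λ → ℝ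
  | 0 => fun x y => if x = y then 1 else 0
  | n + 1 => fun x y => ∑' z, matPow P n x z * P z y

theorem Summable.mul_of_nonneg_of_le {ι : Type*} {f g : ι → ℝ} {C : ℝ} (hf : Summable f)
    (hf0 : ∀ i, 0 ≤ f i) (hg0 : ∀ i, 0 ≤ g i) (hgC : ∀ i, g i ≤ C) :
    Summable fun i => f i * g i :=
  .of_nonneg_of_le (fun i => mul_nonneg (hf0 i) (hg0 i))
    (fun i => mul_le_mul_of_nonneg_left (hgC i) (hf0 i)) (hf.mul_right C)

theorem tsum_le_tsum_of_nonneg {ι : Type*} {f g : ι → ℝ} (hf0 : ∀ i, 0 ≤ f i)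
    (h : ∀ i, f i ≤ g i) (hg : Summable g) : ∑' i, f i ≤ ∑' i, g i :=
  (hg.of_nonneg_of_le hf0 h).tsum_le_tsum h hg

theorem HasSum.tsum_swap_of_nonneg {α β : Type*} {f : α → β → ℝ} {a : ℝ}
    (h0 : ∀ x y, 0 ≤ f x y) (hrow : ∀ x, Summable (f x))
    (hsum : HasSum (fun x => ∑' y, f x y) a) : HasSum (fun y => ∑' x, f x y) a := by
  have hf : Summable (Function.uncurry f) :=
    (summable_prod_of_nonneg fun p => h0 p.1 p.2).mpr ⟨hrow, hsum.summable⟩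
  have hcol : Summable fun y => ∑' x, f x y :=
    ((summable_prod_of_nonneg fun p => h0 p.2 p.1).mp hf.prod_symm).2
  rw [← hsum.tsum_eq, ← hf.tsum_comm]
  exact hcol.hasSum

theorem hasSum_pow_div_pow_succ {q r : ℝ} (hq : 0 ≤ q) (hqr : q < r) :
    HasSum (fun k : ℕ => q ^ k / r ^ (k + 1)) (r - q)⁻¹ := by
  have hr : 0 < r := hq.trans_lt hqr
  have e : (fun k : ℕ => q ^ k / r ^ (k + 1)) = fun k => r⁻¹ * (q / r) ^ k := by
    ext k
    rw [div_pow, pow_succ']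
    field_simp
  rw [e, show (r - q)⁻¹ = r⁻¹ * (1 - q / r)⁻¹ by field_simp]
  exact (hasSum_geometric_of_lt_one (div_nonneg hq hr.le) ((div_lt_one hr).mpr hqr)).mul_left _

theorem hasSum_succ_div_pow_succ {a : ℕ → ℝ} {r : ℝ} (hr : r ≠ 0)
    (ha : Summable fun k => a k / r ^ (k + 1)) :
    HasSum (fun k => a (k + 1) / r ^ (k + 1)) (r * ∑' k, a k / r ^ (k + 1) - a 0) := by
  have h := ((hasSum_nat_add_iff' 1).mpr ha.hasSum).mul_left r
  have e : (fun k => r * (a (k + 1) / r ^ (k + 1 + 1))) = fun k => a (k + 1) / r ^ (k + 1) := by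
    ext k
    rw [pow_succ _ (k + 1)]
    field_simp
  rw [e, Finset.range_one, Finset.sum_singleton, zero_add, pow_one, mul_sub,
    mul_div_cancel₀ _ hr] at h
  exact h

theorem nonempty_of_iSup_lt_tsum {ι : Type*} {f g : ι → ℝ} (h : ⨆ i, f i < ∑' i, g i) :
    Nonempty ι :=
  not_isEmpty_iff.mp fun _ => by simp at h

theorem exists_pos_of_tsum_pos {ι : Type*} {f : ι → ℝ} (h : 0 < ∑' i, f i) : ∃ i, 0 < f i := by
  by_contra! hf
  exact (tsum_nonpos hf).not_gt h

theorem one_sub_iSup_one_sub_le {ι : Type*} {f : ι → ℝ} (hf : ∀ i, 0 ≤ f i) (i : ι) :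
    1 - ⨆ j, (1 - f j) ≤ f i := by
  have := le_ciSup (f := fun j => 1 - f j) ⟨1, by rintro _ ⟨j, rfl⟩; exact sub_le_self 1 (hf j)⟩ i
  linarith

section MatPow

variable {Λ : Type*} [DecidableEq Λ] {P : Λ → Λ → ℝ}

theorem hasSum_matPow_zero_mul (f : Λ → ℝ) (x : Λ) :
    HasSum (fun y => matPow P 0 x y * f y) (f x) := by
  convert hasSum_ite_eq x (f x) using 1
  ext y
  by_cases h : x = y <;> simp [matPow, h, eq_comm]

theorem hasSum_mul_matPow_zero (f : Λ → ℝ) (y : Λ) :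
    HasSum (fun x => f x * matPow P 0 x y) (f y) := by
  convert hasSum_ite_eq y (f y) using 1
  ext x
  by_cases h : x = y <;> simp [matPow, h]

theorem matPow_one (x y : Λ) : matPow P 1 x y = P x y :=
  (hasSum_matPow_zero_mul (P · y) x).tsum_eq

variable (hP0 : ∀ x y, 0 ≤ P x y)
include hP0

theorem matPow_nonneg (n : ℕ) (x y : Λ) : 0 ≤ matPow P n x y := by
  induction n generalizing y with
  | zero => by_cases h : x = y <;> simp [matPow, h]
  | succ n ih => exact tsum_nonneg fun z => mul_nonneg (ih z) (hP0 z y)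

theorem hasSum_matPow_of_hasSum_one (hP : ∀ x, HasSum (P x) 1) (n : ℕ) (x : Λ) :
    HasSum (matPow P n x) 1 := by
  induction n with
  | zero => simpa using hasSum_matPow_zero_mul (P := P) (fun _ => 1) x
  | succ n ih =>
    refine HasSum.tsum_swap_of_nonneg (f := fun z y => matPow P n x z * P z y)
      (fun z y => mul_nonneg (matPow_nonneg hP0 n x z) (hP0 z y))
      (fun z => ((hP z).mul_left _).summable) ?_
    simpa only [((hP _).mul_left _).tsum_eq, mul_one] using ih

theorem matPow_le_one_of_hasSum_one (hP : ∀ x, HasSum (P x) 1) (n : ℕ) (x y : Λ) :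
    matPow P n x y ≤ 1 :=
  le_hasSum (hasSum_matPow_of_hasSum_one hP0 hP n x) y fun z _ => matPow_nonneg hP0 n x z

variable (hPsum : ∀ x, Summable (P x)) (hP1 : ∀ x, ∑' y, P x y ≤ 1)
include hPsum hP1

theorem summable_matPow_and_tsum_le_one (n : ℕ) (x : Λ) :
    Summable (matPow P n x) ∧ ∑' y, matPow P n x y ≤ 1 := by
  induction n with
  | zero =>
    have h := hasSum_matPow_zero_mul (P := P) (fun _ => 1) x
    simp only [mul_one] at h
    exact ⟨h.summable, h.tsum_eq.le⟩
  | succ n ih =>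
    have hrow (z : Λ) : ∑' y, matPow P n x z * P z y ≤ matPow P n x z := by
      rw [tsum_mul_left]
      exact mul_le_of_le_one_right (matPow_nonneg hP0 n x z) (hP1 z)
    have hsum : Summable fun z => ∑' y, matPow P n x z * P z y :=
      .of_nonneg_of_le
        (fun z => tsum_nonneg fun y => mul_nonneg (matPow_nonneg hP0 n x z) (hP0 z y)) hrow ih.1
    have h := HasSum.tsum_swap_of_nonneg (fun z y => mul_nonneg (matPow_nonneg hP0 n x z) (hP0 z y))
      (fun z => (hPsum z).mul_left _) hsum.hasSum
    exact ⟨h.summable, h.tsum_eq ▸ (hsum.tsum_le_tsum hrow ih.1).trans ih.2⟩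

theorem matPow_le_one (n : ℕ) (x y : Λ) : matPow P n x y ≤ 1 :=
  have h := summable_matPow_and_tsum_le_one hP0 hPsum hP1 n x
  (h.1.le_tsum y fun z _ => matPow_nonneg hP0 n x z).trans h.2

theorem summable_matPow_mul (n : ℕ) (x y : Λ) : Summable fun z => matPow P n x z * P z y :=
  (summable_matPow_and_tsum_le_one hP0 hPsum hP1 n x).1.mul_of_nonneg_of_le
    (matPow_nonneg hP0 n x) (hP0 · y)
    fun z => ((hPsum z).le_tsum y fun w _ => hP0 z w).trans (hP1 z)

theorem matPow_succ' (n : ℕ) (x y : Λ) :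
    matPow P (n + 1) x y = ∑' z, P x z * matPow P n z y := by
  induction n generalizing y with
  | zero => exact (matPow_one x y).trans (hasSum_mul_matPow_zero (P x) y).tsum_eq.symm
  | succ n ih =>
    have h0 (z w : Λ) : 0 ≤ P x z * (matPow P n z w * P w y) :=
      mul_nonneg (hP0 x z) (mul_nonneg (matPow_nonneg hP0 n z w) (hP0 w y))
    have hsum : Summable fun z => ∑' w, P x z * (matPow P n z w * P w y) := by
      refine ((hPsum x).mul_of_nonneg_of_le (hP0 x) (fun z => tsum_nonneg fun w =>
        mul_nonneg (matPow_nonneg hP0 n z w) (hP0 w y))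
        fun z => matPow_le_one hP0 hPsum hP1 (n + 1) z y).congr fun z => ?_
      exact tsum_mul_left.symm
    have h := HasSum.tsum_swap_of_nonneg h0
      (fun z => (summable_matPow_mul hP0 hPsum hP1 n z y).mul_left _) hsum.hasSum
    calc matPow P (n + 2) x y = ∑' w, (∑' z, P x z * matPow P n z w) * P w y :=
          tsum_congr fun w => by rw [ih]
      _ = ∑' w, ∑' z, P x z * (matPow P n z w * P w y) :=
          tsum_congr fun w => by rw [← tsum_mul_right]; simp only [mul_assoc]
      _ = ∑' z, P x z * matPow P (n + 1) z y := by
          rw [h.tsum_eq]; exact tsum_congr fun z => tsum_mul_left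

end MatPow

section Irreducible

variable {Λ : Type*} [DecidableEq Λ] {P : Λ → Λ → ℝ} {v : Λ → ℝ} {R : ℝ}

theorem mul_matPow_le_pow_mul_of_subinvariant (hP0 : ∀ x y, 0 ≤ P x y) (hv0 : ∀ x, 0 ≤ v x)
    (hR : 0 ≤ R) (hvP : ∀ y, Summable fun x => v x * P x y)
    (hsub : ∀ y, ∑' x, v x * P x y ≤ R * v y) (n : ℕ) (z y : Λ) :
    v z * matPow P n z y ≤ R ^ n * v y := by
  induction n generalizing y with
  | zero => by_cases h : z = y <;> simp [matPow, h, hv0]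
  | succ n ih =>
    have hle (x : Λ) : v z * (matPow P n z x * P x y) ≤ R ^ n * (v x * P x y) := by
      rw [← mul_assoc, ← mul_assoc]
      exact mul_le_mul_of_nonneg_right (ih x) (hP0 x y)
    calc v z * matPow P (n + 1) z y = ∑' x, v z * (matPow P n z x * P x y) := tsum_mul_left.symm
      _ ≤ ∑' x, R ^ n * (v x * P x y) :=
          tsum_le_tsum_of_nonneg (fun x => mul_nonneg (hv0 z)
            (mul_nonneg (matPow_nonneg hP0 n z x) (hP0 x y))) hle ((hvP y).mul_left _)
      _ ≤ R ^ (n + 1) * v y := by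
          rw [tsum_mul_left, pow_succ, mul_assoc]
          exact mul_le_mul_of_nonneg_left (hsub y) (pow_nonneg hR n)

theorem pos_of_subinvariant_of_matPow_pos (hP0 : ∀ x y, 0 ≤ P x y) (hv0 : ∀ x, 0 ≤ v x)
    (hR : 0 ≤ R) (hvP : ∀ y, Summable fun x => v x * P x y)
    (hsub : ∀ y, ∑' x, v x * P x y ≤ R * v y) {z y : Λ} (hz : 0 < v z) {n : ℕ}
    (hn : 0 < matPow P n z y) : 0 < v y := by
  have h := (mul_pos hz hn).trans_le
    (mul_matPow_le_pow_mul_of_subinvariant hP0 hv0 hR hvP hsub n z y)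
  exact (hv0 y).lt_of_ne fun h0 => by simp [← h0] at h

end Irreducible

section ColumnBounds

variable {α β : Type*} {A : α → β → ℝ}

noncomputable def colInf (A : α → β → ℝ) (y : β) : ℝ := ⨅ x, A x y

noncomputable def colSup (A : α → β → ℝ) (y : β) : ℝ := ⨆ x, A x y

theorem colInf_nonneg (hA : ∀ x y, 0 ≤ A x y) (y : β) : 0 ≤ colInf A y :=
  Real.iInf_nonneg fun x => hA x y

theorem colInf_le (hA : ∀ x y, 0 ≤ A x y) (x : α) (y : β) : colInf A y ≤ A x y :=
  ciInf_le ⟨0, by rintro _ ⟨x', rfl⟩; exact hA x' y⟩ x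

theorem le_colSup (hA : ∀ x y, A x y ≤ 1) (x : α) (y : β) : A x y ≤ colSup A y :=
  le_ciSup (f := (A · y)) ⟨1, by rintro _ ⟨x', rfl⟩; exact hA x' y⟩ x

theorem colInf_le_colSup [Nonempty α] (hA0 : ∀ x y, 0 ≤ A x y) (hA1 : ∀ x y, A x y ≤ 1)
    (y : β) : colInf A y ≤ colSup A y :=
  let ⟨x⟩ := ‹Nonempty α›
  (colInf_le hA0 x y).trans (le_colSup hA1 x y)

variable (hA0 : ∀ x y, 0 ≤ A x y) (hA1 : ∀ x y, A x y ≤ 1) {m : α → ℝ} (hm0 : ∀ x, 0 ≤ m x)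
  (hm : Summable m)
include hA0 hA1 hm0 hm

theorem summable_mul_apply (y : β) : Summable fun x => m x * A x y :=
  hm.mul_of_nonneg_of_le hm0 (hA0 · y) (hA1 · y)

theorem tsum_mul_colInf_le (y : β) : (∑' x, m x) * colInf A y ≤ ∑' x, m x * A x y :=
  hasSum_le (fun x => mul_le_mul_of_nonneg_left (colInf_le hA0 x y) (hm0 x))
    (hm.hasSum.mul_right _) (summable_mul_apply hA0 hA1 hm0 hm y).hasSum

theorem tsum_mul_le_colSup (y : β) : ∑' x, m x * A x y ≤ (∑' x, m x) * colSup A y :=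
  hasSum_le (fun x => mul_le_mul_of_nonneg_left (le_colSup hA1 x y) (hm0 x))
    (summable_mul_apply hA0 hA1 hm0 hm y).hasSum (hm.hasSum.mul_right _)

end ColumnBounds

section Doeblin

variable {Λ : Type*} {S : Λ → Λ → ℝ} {m : Λ → ℝ} (hS : ∀ x, HasSum (S x) 1)
  (hm0 : ∀ y, 0 ≤ m y) (hmS : ∀ x y, m y ≤ S x y) (hm : Summable m)
include hS hm0 hmS hm

theorem tsum_mul_mem_Icc_of_minorization {f : Λ → ℝ} {a b : ℝ} (ha : 0 ≤ a)
    (haf : ∀ z, a ≤ f z) (hfb : ∀ z, f z ≤ b) (x : Λ) :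
    (1 - ∑' z, m z) * a + ∑' z, m z * f z ≤ ∑' z, S x z * f z ∧
      ∑' z, S x z * f z ≤ (1 - ∑' z, m z) * b + ∑' z, m z * f z := by
  have hd0 (z : Λ) : 0 ≤ S x z - m z := sub_nonneg.mpr (hmS x z)
  have hd : HasSum (fun z => S x z - m z) (1 - ∑' z, m z) := (hS x).sub hm.hasSum
  have hf0 (z : Λ) : 0 ≤ f z := ha.trans (haf z)
  have hdf : Summable fun z => (S x z - m z) * f z :=
    hd.summable.mul_of_nonneg_of_le hd0 hf0 hfb
  have hsplit : ∑' z, S x z * f z = ∑' z, (S x z - m z) * f z + ∑' z, m z * f z := by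
    rw [← hdf.tsum_add (hm.mul_of_nonneg_of_le hm0 hf0 hfb)]
    exact tsum_congr fun z => by ring
  rw [hsplit]
  constructor
  · have := hasSum_le (fun z => mul_le_mul_of_nonneg_left (haf z) (hd0 z)) (hd.mul_right a)
      hdf.hasSum
    linarith
  · have := hasSum_le (fun z => mul_le_mul_of_nonneg_left (hfb z) (hd0 z)) hdf.hasSum
      (hd.mul_right b)
    linarith

variable [DecidableEq Λ] (hS0 : ∀ x y, 0 ≤ S x y)
include hS0

theorem matPow_succ_mem_Icc_of_minorization (n : ℕ) (x y : Λ) :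
    (1 - ∑' z, m z) * colInf (matPow S n) y + ∑' z, m z * matPow S n z y ≤
        matPow S (n + 1) x y ∧
      matPow S (n + 1) x y ≤
        (1 - ∑' z, m z) * colSup (matPow S n) y + ∑' z, m z * matPow S n z y := by
  rw [matPow_succ' hS0 (fun x => (hS x).summable) (fun x => (hS x).tsum_eq.le)]
  exact tsum_mul_mem_Icc_of_minorization hS hm0 hmS hm
    (colInf_nonneg (matPow_nonneg hS0 n) y) (colInf_le (matPow_nonneg hS0 n) · y)
    (le_colSup (matPow_le_one_of_hasSum_one hS0 hS n) · y) x

variable [Nonempty Λ]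

theorem monotone_colInf_matPow (y : Λ) : Monotone fun n => colInf (matPow S n) y :=
  monotone_nat_of_le_succ fun n => by
    have := le_ciInf fun x => (matPow_succ_mem_Icc_of_minorization hS hm0 hmS hm hS0 n x y).1
    have := tsum_mul_colInf_le (matPow_nonneg hS0 n) (matPow_le_one_of_hasSum_one hS0 hS n)
      hm0 hm y
    exact le_of_sub_nonneg (by unfold colInf at *; linarith)

theorem antitone_colSup_matPow (y : Λ) : Antitone fun n => colSup (matPow S n) y :=
  antitone_nat_of_succ_le fun n => by
    have := ciSup_le fun x => (matPow_succ_mem_Icc_of_minorization hS hm0 hmS hm hS0 n x y).2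
    have := tsum_mul_le_colSup (matPow_nonneg hS0 n) (matPow_le_one_of_hasSum_one hS0 hS n)
      hm0 hm y
    exact le_of_sub_nonneg (by unfold colSup at *; linarith)

theorem colSup_sub_colInf_matPow_le (n : ℕ) (y : Λ) :
    colSup (matPow S n) y - colInf (matPow S n) y ≤ (1 - ∑' z, m z) ^ n := by
  induction n with
  | zero =>
    have := ciSup_le fun x => matPow_le_one_of_hasSum_one hS0 hS 0 x y
    have := colInf_nonneg (matPow_nonneg hS0 0) y
    unfold colSup at *
    linarith [pow_zero (1 - ∑' z, m z)]
  | succ n ih =>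
    obtain ⟨x₀⟩ := ‹Nonempty Λ›
    have hε1 : ∑' z, m z ≤ 1 := hasSum_le (hmS x₀) hm.hasSum (hS x₀)
    have := mul_le_mul_of_nonneg_left ih (sub_nonneg.mpr hε1)
    have := ciSup_le fun x => (matPow_succ_mem_Icc_of_minorization hS hm0 hmS hm hS0 n x y).2
    have := le_ciInf fun x => (matPow_succ_mem_Icc_of_minorization hS hm0 hmS hm hS0 n x y).1
    unfold colSup colInf at *
    rw [pow_succ']
    linarith

theorem exists_tendsto_matPow_of_minorization (hε : 0 < ∑' z, m z) :
    ∃ ρ : Λ → ℝ, (∀ x y, Tendsto (fun n => matPow S n x y) atTop (𝓝 (ρ y))) ∧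
      ∀ k z y, m z * matPow S k z y ≤ ρ y := by
  obtain ⟨x₀⟩ := ‹Nonempty Λ›
  have hε1 : ∑' z, m z ≤ 1 := hasSum_le (hmS x₀) hm.hasSum (hS x₀)
  have hS1 := matPow_le_one_of_hasSum_one hS0 hS
  have hIA (n : ℕ) := colInf_le_colSup (matPow_nonneg hS0 n) (hS1 n)
  have hA (y : Λ) : Tendsto (fun n => colSup (matPow S n) y) atTop
      (𝓝 (⨅ n, colSup (matPow S n) y)) :=
    tendsto_atTop_ciInf (antitone_colSup_matPow hS hm0 hmS hm hS0 y)
      ⟨0, by rintro _ ⟨n, rfl⟩; exact (colInf_nonneg (matPow_nonneg hS0 n) y).trans (hIA n y)⟩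
  have hI (y : Λ) : Tendsto (fun n => colInf (matPow S n) y) atTop
      (𝓝 (⨅ n, colSup (matPow S n) y)) := by
    have hpow := tendsto_pow_atTop_nhds_zero_of_lt_one (sub_nonneg.mpr hε1) (by linarith)
    refine tendsto_of_tendsto_of_tendsto_of_le_of_le (by simpa using (hA y).sub hpow) (hA y)
      (fun n => ?_) (hIA · y)
    linarith [colSup_sub_colInf_matPow_le hS hm0 hmS hm hS0 n y]
  refine ⟨fun y => ⨅ n, colSup (matPow S n) y, fun x y => ?_, fun k z y => ?_⟩
  · exact tendsto_of_tendsto_of_tendsto_of_le_of_le (hI y) (hA y)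
      (fun n => colInf_le (matPow_nonneg hS0 n) x y) (fun n => le_colSup (hS1 n) x y)
  · calc m z * matPow S k z y ≤ ∑' w, m w * matPow S k w y :=
          (summable_mul_apply (matPow_nonneg hS0 k) (hS1 k) hm0 hm y).le_tsum z
            fun w _ => mul_nonneg (hm0 w) (matPow_nonneg hS0 k w y)
      _ ≤ colInf (matPow S (k + 1)) y := le_ciInf fun x => by
          have := (matPow_succ_mem_Icc_of_minorization hS hm0 hmS hm hS0 k x y).1
          have := mul_nonneg (sub_nonneg.mpr hε1) (colInf_nonneg (matPow_nonneg hS0 k) y)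
          linarith
      _ ≤ ⨅ n, colSup (matPow S n) y :=
          (monotone_colInf_matPow hS hm0 hmS hm hS0 y).ge_of_tendsto (hI y) (k + 1)

end Doeblin

theorem matPow_doobTransform {Λ : Type*} [DecidableEq Λ] {P : Λ → Λ → ℝ} {μ : Λ → ℝ} {R : ℝ}
    (hμ : ∀ x, μ x ≠ 0) (hR : R ≠ 0) (n : ℕ) (x y : Λ) :
    matPow (fun x y => P x y * μ y / (R * μ x)) n x y = matPow P n x y * μ y / (R ^ n * μ x) := by
  induction n generalizing y with
  | zero => by_cases h : x = y <;> simp [matPow, h, hμ]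
  | succ n ih =>
    calc matPow (fun x y => P x y * μ y / (R * μ x)) (n + 1) x y
        = ∑' z, μ y / (R ^ (n + 1) * μ x) * (matPow P n x z * P z y) := tsum_congr fun z => by
          rw [ih]
          field_simp [hμ z, hμ x]
          ring
      _ = matPow P (n + 1) x y * μ y / (R ^ (n + 1) * μ x) := by
          rw [tsum_mul_left]
          exact (mul_comm _ _).trans (mul_div_assoc _ _ _).symm

theorem exists_tendsto_matPow_div_pow {Λ : Type*} [DecidableEq Λ] [Nonempty Λ]
    {P : Λ → Λ → ℝ} {μ p : Λ → ℝ} {R c C : ℝ} (hP0 : ∀ x y, 0 ≤ P x y) (hR : 0 < R)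
    (hμ : ∀ x, HasSum (fun y => P x y * μ y) (R * μ x)) (hc : 0 < c) (hcμ : ∀ x, c ≤ μ x)
    (hμC : ∀ x, μ x ≤ C) (hp0 : ∀ y, 0 ≤ p y) (hpP : ∀ x y, p y ≤ P x y) (hp : Summable p)
    {z : Λ} (hz : 0 < p z) (hzirr : ∀ y, ∃ n, 0 < matPow P n z y) (x : Λ) :
    ∃ L, 0 < L ∧ Tendsto (fun n => matPow P n x x / R ^ n) atTop (𝓝 L) := by
  have hμ0 (x : Λ) : 0 < μ x := hc.trans_le (hcμ x)
  have hC : 0 < C := (hμ0 x).trans_le (hμC x)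
  have hdoob := matPow_doobTransform (P := P) (fun x => (hμ0 x).ne') hR.ne'
  set m : Λ → ℝ := fun y => p y * c / (R * C)
  have hm0 (y : Λ) : 0 ≤ m y := div_nonneg (mul_nonneg (hp0 y) hc.le) (mul_pos hR hC).le
  have hm : Summable m := (hp.mul_right c).div_const _
  have hmS (x y : Λ) : m y ≤ P x y * μ y / (R * μ x) :=
    div_le_div₀ (mul_nonneg (hP0 x y) (hμ0 y).le)
      (mul_le_mul (hpP x y) (hcμ y) hc.le (hP0 x y)) (mul_pos hR (hμ0 x))
      (mul_le_mul_of_nonneg_left (hμC x) hR.le)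
  obtain ⟨ρ, hρ, hρm⟩ := exists_tendsto_matPow_of_minorization
    (fun x => by simpa [div_self (mul_pos hR (hμ0 x)).ne'] using (hμ x).div_const (R * μ x))
    hm0 hmS hm (fun x y => div_nonneg (mul_nonneg (hP0 x y) (hμ0 y).le) (mul_pos hR (hμ0 x)).le)
    (hm.tsum_pos hm0 z (by positivity))
  obtain ⟨n, hn⟩ := hzirr x
  refine ⟨ρ x, (mul_pos (by positivity) ?_).trans_le (hρm n z x), ?_⟩
  · rw [hdoob]
    exact div_pos (mul_pos hn (hμ0 x)) (mul_pos (pow_pos hR n) (hμ0 z))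
  · exact (hρ x x).congr fun n => by rw [hdoob, mul_div_mul_right _ _ (hμ0 x).ne']

section Renewal

variable {Λ : Type*} (Q : Λ → Λ → ℝ) (p : Λ → ℝ)

-- `powMulVecOne Q k = Qᵏ 1` and `vecMulPow Q p k = p Qᵏ`; the resolvents `(r - Q)⁻¹ 1`,
-- `p (r - Q)⁻¹` and `p (r - Q)⁻¹ 1` are written as Neumann series `∑ₖ Qᵏ / rᵏ⁺¹`.
noncomputable def powMulVecOne : ℕ → Λ → ℝ
  | 0 => fun _ => 1
  | k + 1 => fun x => ∑' y, Q x y * powMulVecOne k y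

noncomputable def vecMulPow : ℕ → Λ → ℝ
  | 0 => p
  | k + 1 => fun y => ∑' x, vecMulPow k x * Q x y

noncomputable def rightResolvent (r : ℝ) (x : Λ) : ℝ :=
  ∑' k, powMulVecOne Q k x / r ^ (k + 1)

noncomputable def leftResolvent (r : ℝ) (y : Λ) : ℝ :=
  ∑' k, vecMulPow Q p k y / r ^ (k + 1)

noncomputable def renewalSeries (r : ℝ) : ℝ :=
  ∑' k, (∑' y, vecMulPow Q p k y) / r ^ (k + 1)

variable {Q p} {q : ℝ} (hQ0 : ∀ x y, 0 ≤ Q x y)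
include hQ0

theorem powMulVecOne_nonneg (k : ℕ) (x : Λ) : 0 ≤ powMulVecOne Q k x := by
  induction k generalizing x with
  | zero => exact zero_le_one
  | succ k ih => exact tsum_nonneg fun y => mul_nonneg (hQ0 x y) (ih y)

theorem vecMulPow_nonneg (hp0 : ∀ y, 0 ≤ p y) (k : ℕ) (y : Λ) : 0 ≤ vecMulPow Q p k y := by
  induction k generalizing y with
  | zero => exact hp0 y
  | succ k ih => exact tsum_nonneg fun x => mul_nonneg (ih x) (hQ0 x y)

variable (hQsum : ∀ x, Summable (Q x)) (hq : 0 ≤ q) (hQq : ∀ x, ∑' y, Q x y ≤ q)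
include hQsum hq hQq

theorem powMulVecOne_le (k : ℕ) (x : Λ) : powMulVecOne Q k x ≤ q ^ k := by
  induction k generalizing x with
  | zero => exact (pow_zero q).ge
  | succ k ih =>
    calc powMulVecOne Q (k + 1) x ≤ ∑' y, Q x y * q ^ k :=
          tsum_le_tsum_of_nonneg (fun y => mul_nonneg (hQ0 x y) (powMulVecOne_nonneg hQ0 k y))
            (fun y => mul_le_mul_of_nonneg_left (ih y) (hQ0 x y)) ((hQsum x).mul_right _)
      _ ≤ q ^ (k + 1) := by
          rw [tsum_mul_right, pow_succ']
          exact mul_le_mul_of_nonneg_right (hQq x) (pow_nonneg hq k)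

theorem summable_mul_powMulVecOne (k : ℕ) (x : Λ) :
    Summable fun y => Q x y * powMulVecOne Q k y :=
  (hQsum x).mul_of_nonneg_of_le (hQ0 x) (powMulVecOne_nonneg hQ0 k)
    (powMulVecOne_le hQ0 hQsum hq hQq k)

theorem pow_le_powMulVecOne {s : ℝ} (hs0 : 0 ≤ s) (hs : ∀ x, s ≤ ∑' y, Q x y) (k : ℕ) (x : Λ) :
    s ^ k ≤ powMulVecOne Q k x := by
  induction k generalizing x with
  | zero => exact (pow_zero s).le
  | succ k ih =>
    calc s ^ (k + 1) ≤ ∑' y, Q x y * s ^ k := by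
          rw [tsum_mul_right, pow_succ']
          exact mul_le_mul_of_nonneg_right (hs x) (pow_nonneg hs0 k)
      _ ≤ powMulVecOne Q (k + 1) x :=
          ((hQsum x).mul_right _).tsum_le_tsum (fun y => mul_le_mul_of_nonneg_left (ih y) (hQ0 x y))
            (summable_mul_powMulVecOne hQ0 hQsum hq hQq k x)

theorem summable_powMulVecOne_div {r : ℝ} (hqr : q < r) (x : Λ) :
    Summable fun k => powMulVecOne Q k x / r ^ (k + 1) :=
  (hasSum_pow_div_pow_succ hq hqr).summable.of_nonneg_of_le
    (fun k => div_nonneg (powMulVecOne_nonneg hQ0 k x) (pow_nonneg (hq.trans hqr.le) _))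
    (fun k => div_le_div_of_nonneg_right (powMulVecOne_le hQ0 hQsum hq hQq k x)
      (pow_nonneg (hq.trans hqr.le) _))

theorem rightResolvent_le {r : ℝ} (hqr : q < r) (x : Λ) : rightResolvent Q r x ≤ (r - q)⁻¹ :=
  hasSum_le (fun k => div_le_div_of_nonneg_right (powMulVecOne_le hQ0 hQsum hq hQq k x)
      (pow_nonneg (hq.trans hqr.le) _))
    (summable_powMulVecOne_div hQ0 hQsum hq hQq hqr x).hasSum (hasSum_pow_div_pow_succ hq hqr)

theorem inv_le_rightResolvent {r : ℝ} (hqr : q < r) (x : Λ) : r⁻¹ ≤ rightResolvent Q r x := by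
  simpa [powMulVecOne, rightResolvent] using
    (summable_powMulVecOne_div hQ0 hQsum hq hQq hqr x).le_tsum 0
    fun k _ => div_nonneg (powMulVecOne_nonneg hQ0 k x) (pow_nonneg (hq.trans hqr.le) _)

theorem hasSum_mul_rightResolvent {r : ℝ} (hqr : q < r) (x : Λ) :
    HasSum (fun y => Q x y * rightResolvent Q r y) (r * rightResolvent Q r x - 1) := by
  have hr : 0 < r := hq.trans_lt hqr
  have hrow (k : ℕ) : ∑' y, Q x y * (powMulVecOne Q k y / r ^ (k + 1)) =
      powMulVecOne Q (k + 1) x / r ^ (k + 1) := by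
    simp only [← mul_div_assoc, tsum_div_const]
    rfl
  have h := HasSum.tsum_swap_of_nonneg
    (fun k y => mul_nonneg (hQ0 x y)
      (div_nonneg (powMulVecOne_nonneg hQ0 k y) (pow_nonneg hr.le _)))
    (fun k => by simpa only [mul_div_assoc] using
      (summable_mul_powMulVecOne hQ0 hQsum hq hQq k x).div_const (r ^ (k + 1)))
    ((hasSum_succ_div_pow_succ hr.ne' (summable_powMulVecOne_div hQ0 hQsum hq hQq hqr x)).congr_fun
      hrow)
  exact h.congr_fun fun y => tsum_mul_left.symm

variable (hp0 : ∀ y, 0 ≤ p y) (hp : Summable p)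
include hp0 hp

theorem summable_vecMulPow_and_tsum_le (k : ℕ) :
    Summable (vecMulPow Q p k) ∧ ∑' y, vecMulPow Q p k y ≤ (∑' y, p y) * q ^ k := by
  induction k with
  | zero => exact ⟨hp, (mul_one _).ge⟩
  | succ k ih =>
    have h0 := vecMulPow_nonneg hQ0 hp0 k
    have hrow (x : Λ) : ∑' y, vecMulPow Q p k x * Q x y ≤ vecMulPow Q p k x * q := by
      rw [tsum_mul_left]
      exact mul_le_mul_of_nonneg_left (hQq x) (h0 x)
    have hsum : Summable fun x => ∑' y, vecMulPow Q p k x * Q x y :=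
      .of_nonneg_of_le (fun x => tsum_nonneg fun y => mul_nonneg (h0 x) (hQ0 x y)) hrow
        (ih.1.mul_right q)
    have h := HasSum.tsum_swap_of_nonneg (fun x y => mul_nonneg (h0 x) (hQ0 x y))
      (fun x => (hQsum x).mul_left _) hsum.hasSum
    refine ⟨h.summable, ?_⟩
    calc ∑' y, vecMulPow Q p (k + 1) y ≤ ∑' x, vecMulPow Q p k x * q :=
          h.tsum_eq ▸ hsum.tsum_le_tsum hrow (ih.1.mul_right q)
      _ ≤ (∑' y, p y) * q ^ k * q := by
          rw [tsum_mul_right]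
          exact mul_le_mul_of_nonneg_right ih.2 hq
      _ = (∑' y, p y) * q ^ (k + 1) := by ring

theorem tsum_vecMulPow_mul_powMulVecOne_succ (k j : ℕ) :
    ∑' y, vecMulPow Q p k y * powMulVecOne Q (j + 1) y =
      ∑' y, vecMulPow Q p (k + 1) y * powMulVecOne Q j y := by
  have h0 := vecMulPow_nonneg hQ0 hp0 k
  have hrow (x : Λ) : ∑' y, vecMulPow Q p k x * (Q x y * powMulVecOne Q j y) =
      vecMulPow Q p k x * powMulVecOne Q (j + 1) x :=
    tsum_mul_left
  have hsum : Summable fun x => vecMulPow Q p k x * powMulVecOne Q (j + 1) x :=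
    (summable_vecMulPow_and_tsum_le hQ0 hQsum hq hQq hp0 hp k).1.mul_of_nonneg_of_le h0
      (powMulVecOne_nonneg hQ0 (j + 1)) (powMulVecOne_le hQ0 hQsum hq hQq (j + 1))
  have h := HasSum.tsum_swap_of_nonneg
    (fun x y => mul_nonneg (h0 x) (mul_nonneg (hQ0 x y) (powMulVecOne_nonneg hQ0 j y)))
    (fun x => (summable_mul_powMulVecOne hQ0 hQsum hq hQq j x).mul_left _)
    (hsum.hasSum.congr_fun hrow)
  rw [← h.tsum_eq]
  exact tsum_congr fun y => by simp only [← mul_assoc, tsum_mul_right]; rfl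

theorem tsum_vecMulPow (k : ℕ) : ∑' y, vecMulPow Q p k y = ∑' y, p y * powMulVecOne Q k y := by
  have h (j i : ℕ) : ∑' y, vecMulPow Q p i y * powMulVecOne Q j y =
      ∑' y, vecMulPow Q p (i + j) y * powMulVecOne Q 0 y := by
    induction j generalizing i with
    | zero => rfl
    | succ j ih =>
      rw [tsum_vecMulPow_mul_powMulVecOne_succ hQ0 hQsum hq hQq hp0 hp, ih, add_right_comm,
        add_assoc]
  simpa [powMulVecOne, vecMulPow] using (h k 0).symm

theorem summable_vecMulPow_div {r : ℝ} (hqr : q < r) (y : Λ) :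
    Summable fun k => vecMulPow Q p k y / r ^ (k + 1) := by
  have hr : 0 < r := hq.trans_lt hqr
  refine ((hasSum_pow_div_pow_succ hq hqr).mul_left (∑' y, p y)).summable.of_nonneg_of_le
    (fun k => div_nonneg (vecMulPow_nonneg hQ0 hp0 k y) (pow_nonneg hr.le _)) fun k => ?_
  have hk := summable_vecMulPow_and_tsum_le hQ0 hQsum hq hQq hp0 hp k
  rw [← mul_div_assoc]
  exact div_le_div_of_nonneg_right
    ((hk.1.le_tsum y fun x _ => vecMulPow_nonneg hQ0 hp0 k x).trans hk.2)
    (pow_nonneg hr.le _)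

theorem div_le_leftResolvent {r : ℝ} (hqr : q < r) (y : Λ) : p y / r ≤ leftResolvent Q p r y := by
  simpa [vecMulPow, leftResolvent] using
    (summable_vecMulPow_div hQ0 hQsum hq hQq hp0 hp hqr y).le_tsum 0
    fun k _ => div_nonneg (vecMulPow_nonneg hQ0 hp0 k y) (pow_nonneg (hq.trans hqr.le) _)

theorem hasSum_leftResolvent_mul {r : ℝ} (hqr : q < r) (y : Λ) :
    HasSum (fun x => leftResolvent Q p r x * Q x y) (r * leftResolvent Q p r y - p y) := by
  have hr : 0 < r := hq.trans_lt hqr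
  have hQle (x : Λ) : Q x y ≤ q :=
    ((hQsum x).le_tsum y fun z _ => hQ0 x z).trans (hQq x)
  have hrow (k : ℕ) : ∑' x, vecMulPow Q p k x / r ^ (k + 1) * Q x y =
      vecMulPow Q p (k + 1) y / r ^ (k + 1) := by
    simp only [div_mul_eq_mul_div, tsum_div_const]
    rfl
  have h := HasSum.tsum_swap_of_nonneg
    (fun k x => mul_nonneg (div_nonneg (vecMulPow_nonneg hQ0 hp0 k x) (pow_nonneg hr.le _))
      (hQ0 x y))
    (fun k => by simpa only [div_mul_eq_mul_div] using
      ((summable_vecMulPow_and_tsum_le hQ0 hQsum hq hQq hp0 hp k).1.mul_of_nonneg_of_le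
        (vecMulPow_nonneg hQ0 hp0 k) (hQ0 · y) hQle).div_const (r ^ (k + 1)))
    ((hasSum_succ_div_pow_succ hr.ne'
      (summable_vecMulPow_div hQ0 hQsum hq hQq hp0 hp hqr y)).congr_fun hrow)
  exact h.congr_fun fun x => tsum_mul_right.symm

theorem summable_renewalSeries {r : ℝ} (hqr : q < r) :
    Summable fun k => (∑' y, vecMulPow Q p k y) / r ^ (k + 1) := by
  have hr : 0 < r := hq.trans_lt hqr
  refine ((hasSum_pow_div_pow_succ hq hqr).mul_left (∑' y, p y)).summable.of_nonneg_of_le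
    (fun k => div_nonneg (tsum_nonneg (vecMulPow_nonneg hQ0 hp0 k)) (pow_nonneg hr.le _))
    fun k => ?_
  rw [← mul_div_assoc]
  exact div_le_div_of_nonneg_right (summable_vecMulPow_and_tsum_le hQ0 hQsum hq hQq hp0 hp k).2
    (pow_nonneg hr.le _)

theorem hasSum_leftResolvent {r : ℝ} (hqr : q < r) :
    HasSum (leftResolvent Q p r) (renewalSeries Q p r) :=
  HasSum.tsum_swap_of_nonneg
    (fun k y => div_nonneg (vecMulPow_nonneg hQ0 hp0 k y) (pow_nonneg (hq.trans hqr.le) _))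
    (fun k => (summable_vecMulPow_and_tsum_le hQ0 hQsum hq hQq hp0 hp k).1.div_const _)
    ((summable_renewalSeries hQ0 hQsum hq hQq hp0 hp hqr).hasSum.congr_fun fun _ => tsum_div_const)

theorem hasSum_mul_rightResolvent_renewalSeries {r : ℝ} (hqr : q < r) :
    HasSum (fun y => p y * rightResolvent Q r y) (renewalSeries Q p r) := by
  have hrow (k : ℕ) : ∑' y, p y * (powMulVecOne Q k y / r ^ (k + 1)) =
      (∑' y, vecMulPow Q p k y) / r ^ (k + 1) := by
    simp only [← mul_div_assoc, tsum_div_const, tsum_vecMulPow hQ0 hQsum hq hQq hp0 hp]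
  have hsum (k : ℕ) : Summable fun y => p y * powMulVecOne Q k y :=
    hp.mul_of_nonneg_of_le hp0 (powMulVecOne_nonneg hQ0 k) (powMulVecOne_le hQ0 hQsum hq hQq k)
  have h := HasSum.tsum_swap_of_nonneg
    (fun k y => mul_nonneg (hp0 y) (div_nonneg (powMulVecOne_nonneg hQ0 k y)
      (pow_nonneg (hq.trans hqr.le) _)))
    (fun k => by simpa only [mul_div_assoc] using (hsum k).div_const (r ^ (k + 1)))
    ((summable_renewalSeries hQ0 hQsum hq hQq hp0 hp hqr).hasSum.congr_fun hrow)
  exact h.congr_fun fun y => tsum_mul_left.symm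

theorem renewalSeries_le {r : ℝ} (hqr : q < r) :
    renewalSeries Q p r ≤ (∑' y, p y) * (r - q)⁻¹ :=
  hasSum_le (fun k => by
      rw [← mul_div_assoc]
      exact div_le_div_of_nonneg_right (summable_vecMulPow_and_tsum_le hQ0 hQsum hq hQq hp0 hp k).2
        (pow_nonneg (hq.trans hqr.le) _))
    (summable_renewalSeries hQ0 hQsum hq hQq hp0 hp hqr).hasSum
    ((hasSum_pow_div_pow_succ hq hqr).mul_left _)

theorem le_renewalSeries {r s : ℝ} (hqr : q < r) (hs0 : 0 ≤ s) (hs : ∀ x, s ≤ ∑' y, Q x y)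
    (hsr : s < r) : (∑' y, p y) * (r - s)⁻¹ ≤ renewalSeries Q p r := by
  refine hasSum_le (fun k => ?_) ((hasSum_pow_div_pow_succ hs0 hsr).mul_left _)
    (summable_renewalSeries hQ0 hQsum hq hQq hp0 hp hqr).hasSum
  rw [← mul_div_assoc, tsum_vecMulPow hQ0 hQsum hq hQq hp0 hp, ← tsum_mul_right]
  refine div_le_div_of_nonneg_right ((hp.mul_right _).tsum_le_tsum (fun y => ?_)
    (hp.mul_of_nonneg_of_le hp0 (powMulVecOne_nonneg hQ0 k) (powMulVecOne_le hQ0 hQsum hq hQq k)))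
    (pow_nonneg (hq.trans hqr.le) _)
  exact mul_le_mul_of_nonneg_left (pow_le_powMulVecOne hQ0 hQsum hq hQq hs0 hs k y) (hp0 y)

theorem continuousOn_renewalSeries {r : ℝ} (hqr : q < r) :
    ContinuousOn (renewalSeries Q p) (Set.Ici r) := by
  have hr : 0 < r := hq.trans_lt hqr
  refine continuousOn_tsum (fun k => continuousOn_const.div (continuous_pow _).continuousOn
      fun t ht => pow_ne_zero _ (hr.trans_le ht).ne')
    ((hasSum_pow_div_pow_succ hq hqr).mul_left (∑' y, p y)).summable fun k t ht => ?_
  rw [Real.norm_of_nonneg (div_nonneg (tsum_nonneg (vecMulPow_nonneg hQ0 hp0 k))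
    (pow_nonneg (hr.le.trans ht) _)), ← mul_div_assoc]
  exact div_le_div₀ (mul_nonneg (tsum_nonneg hp0) (pow_nonneg hq k))
    (summable_vecMulPow_and_tsum_le hQ0 hQsum hq hQq hp0 hp k).2 (pow_pos hr _)
    (pow_le_pow_left₀ hr.le ht _)

end Renewal

theorem exists_renewalSeries_eq_one {Λ : Type*} [Nonempty Λ] {Q : Λ → Λ → ℝ} {p : Λ → ℝ}
    {q s : ℝ} (hQ0 : ∀ x y, 0 ≤ Q x y) (hQsum : ∀ x, Summable (Q x)) (hq : 0 ≤ q)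
    (hQq : ∀ x, ∑' y, Q x y ≤ q) (hp0 : ∀ y, 0 ≤ p y) (hp : Summable p) (hs0 : 0 ≤ s)
    (hs : ∀ x, s ≤ ∑' y, Q x y) (hqs : q < s + ∑' y, p y) (hq1 : q + ∑' y, p y ≤ 1) :
    ∃ R, s + ∑' y, p y ≤ R ∧ R ≤ 1 ∧ renewalSeries Q p R = 1 := by
  obtain ⟨x₀⟩ := ‹Nonempty Λ›
  set δ := ∑' y, p y
  have hδ : 0 < δ := by linarith [(hs x₀).trans (hQq x₀)]
  have hF1 : renewalSeries Q p 1 ≤ 1 := by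
    refine (renewalSeries_le hQ0 hQsum hq hQq hp0 hp (by linarith)).trans ?_
    rw [← div_eq_mul_inv, div_le_one (by linarith)]
    linarith
  have hF0 : 1 ≤ renewalSeries Q p (s + δ) := by
    refine le_of_eq_of_le ?_ (le_renewalSeries hQ0 hQsum hq hQq hp0 hp hqs hs0 hs (by linarith))
    rw [add_sub_cancel_left, mul_inv_cancel₀ hδ.ne']
  obtain ⟨R, hR, hFR⟩ := intermediate_value_Icc' (by linarith [(hs x₀).trans (hQq x₀)])
    ((continuousOn_renewalSeries hQ0 hQsum hq hQq hp0 hp hqs).mono Set.Icc_subset_Ici_self)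
    ⟨hF1, hF0⟩
  exact ⟨R, hR.1, hR.2, hFR⟩

theorem exists_eigenvectors_of_minorant {Λ : Type*} [Nonempty Λ] {P : Λ → Λ → ℝ} {p : Λ → ℝ}
    {s : ℝ} (hPsum : ∀ x, Summable (P x)) (hP1 : ∀ x, ∑' y, P x y ≤ 1)
    (hs : ∀ x, s ≤ ∑' y, P x y) (hp0 : ∀ y, 0 ≤ p y) (hpP : ∀ x y, p y ≤ P x y)
    (hp : Summable p) (hsp : 1 - ∑' y, p y < s) :
    ∃ R, 0 < R ∧ R ≤ 1 ∧ ∃ μ ν : Λ → ℝ,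
      (∀ x, HasSum (fun y => P x y * μ y) (R * μ x)) ∧ (∀ x, 1 ≤ μ x) ∧ (∃ C, ∀ x, μ x ≤ C) ∧
      (∀ y, HasSum (fun x => ν x * P x y) (R * ν y)) ∧ Summable ν ∧ ∀ y, p y / R ≤ ν y := by
  obtain ⟨x₀⟩ := ‹Nonempty Λ›
  set δ := ∑' y, p y
  set Q : Λ → Λ → ℝ := fun x y => P x y - p y
  have hQ0 (x y : Λ) : 0 ≤ Q x y := sub_nonneg.mpr (hpP x y)
  have hQsum (x : Λ) : Summable (Q x) := (hPsum x).sub hp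
  have hδP (x : Λ) : δ ≤ ∑' y, P x y := hp.tsum_le_tsum (hpP x) (hPsum x)
  have hQrow (x : Λ) : ∑' y, Q x y = ∑' y, P x y - δ := (hPsum x).tsum_sub hp
  have hq : 0 ≤ 1 - δ := sub_nonneg.mpr ((hδP x₀).trans (hP1 x₀))
  have hQq (x : Λ) : ∑' y, Q x y ≤ 1 - δ := by linarith [hQrow x, hP1 x]
  obtain ⟨R, hR₀, hR1, hFR⟩ := exists_renewalSeries_eq_one (s := max s δ - δ) hQ0 hQsum hq hQq
    hp0 hp (by linarith [le_max_right s δ])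
    (fun x => by linarith [hQrow x, max_le (hs x) (hδP x)])
    (by linarith [le_max_left s δ]) (by linarith)
  have hqR : 1 - δ < R := by linarith [le_max_left s δ]
  have hR : 0 < R := by linarith
  have hsplit (x y : Λ) : P x y = Q x y + p y := (sub_add_cancel _ _).symm
  refine ⟨R, hR, hR1, rightResolvent Q R, leftResolvent Q p R, fun x => ?_, fun x => ?_,
    ⟨_, rightResolvent_le hQ0 hQsum hq hQq hqR⟩, fun y => ?_,
    (hasSum_leftResolvent hQ0 hQsum hq hQq hp0 hp hqR).summable,
    div_le_leftResolvent hQ0 hQsum hq hQq hp0 hp hqR⟩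
  · have h := (hasSum_mul_rightResolvent hQ0 hQsum hq hQq hqR x).add
      (hFR ▸ hasSum_mul_rightResolvent_renewalSeries hQ0 hQsum hq hQq hp0 hp hqR)
    rw [sub_add_cancel] at h
    exact h.congr_fun fun y => by rw [hsplit, add_mul]
  · exact ((one_le_inv₀ hR).mpr hR1).trans (inv_le_rightResolvent hQ0 hQsum hq hQq hqR x)
  · have h := (hasSum_leftResolvent_mul hQ0 hQsum hq hQq hp0 hp hqR y).add
      ((hFR ▸ hasSum_leftResolvent hQ0 hQsum hq hQq hp0 hp hqR).mul_right (p y))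
    rw [one_mul, sub_add_cancel] at h
    exact h.congr_fun fun x => by rw [hsplit, mul_add]

theorem eq_one_of_dvd_of_tendsto_div_pow {a : ℕ → ℝ} {R L : ℝ} (hR : 0 < R) (hL : 0 < L)
    (h : Tendsto (fun n => a n / R ^ n) atTop (𝓝 L)) {d : ℕ}
    (hd : ∀ n, 1 ≤ n → 0 < a n → d ∣ n) : d = 1 := by
  obtain ⟨N, hN⟩ := eventually_atTop.mp (h.eventually (lt_mem_nhds hL))
  have hpos (n : ℕ) (hn : N ≤ n) : 0 < a n := (div_pos_iff_of_pos_right (pow_pos hR n)).mp (hN n hn)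
  have h1 := hd (N + 1) (by omega) (hpos _ (by omega))
  have h2 := hd (N + 1 + 1) (by omega) (hpos _ (by omega))
  exact Nat.dvd_one.mp ((Nat.dvd_add_right h1).mp h2)

theorem tendsto_rpow_inv_of_tendsto_div_pow {a : ℕ → ℝ} {R L : ℝ} (ha : ∀ n, 0 ≤ a n)
    (hR : 0 < R) (hL : 0 < L) (h : Tendsto (fun n => a n / R ^ n) atTop (𝓝 L)) :
    Tendsto (fun n : ℕ => a n ^ ((n : ℝ)⁻¹)) atTop (𝓝 R) := by
  have h1 := (h.rpow (tendsto_inv_atTop_zero.comp tendsto_natCast_atTop_atTop)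
    (Or.inl hL.ne')).mul_const R
  rw [Real.rpow_zero, one_mul] at h1
  refine h1.congr' ?_
  filter_upwards [eventually_ne_atTop 0] with n hn
  rw [Function.comp_apply, Real.div_rpow (ha n) (pow_nonneg hR.le n),
    Real.pow_rpow_inv_natCast hR.le hn, div_mul_cancel₀ _ hR.ne']

theorem doeblin_implies_R_positivity_general
    {Λ : Type*} [DecidableEq Λ]
    (P : Λ → Λ → ℝ)
    -- substochastic
    (hP0 : ∀ x y, 0 ≤ P x y)
    (hPsum : ∀ x, Summable (P x))
    (hP1 : ∀ x, ∑' y, P x y ≤ 1)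
    -- irreducible
    (hirr : ∀ x y, ∃ n, 1 ≤ n ∧ 0 < matPow P n x y)
    -- the Doeblin condition δ > c
    (hδc : (⨆ x, (1 - ∑' y, P x y)) < ∑' z, ⨅ x, P x z) :
    -- aperiodicity: gcd of return times is 1
    (∀ x, ∀ d : ℕ, (∀ n, 1 ≤ n → 0 < matPow P n x x → d ∣ n) → d = 1) ∧
    ∃ R : ℝ, 0 < R ∧ R ≤ 1 ∧
      -- R is the decay parameter
      (∀ x, Tendsto (fun n : ℕ => (matPow P n x x) ^ ((n : ℝ)⁻¹)) atTop (𝓝 R)) ∧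
      -- R-positivity: lim R^{-n} P^n(x,x) exists and is positive
      (∀ x, ∃ L : ℝ, 0 < L ∧
        Tendsto (fun n : ℕ => matPow P n x x / R ^ n) atTop (𝓝 L)) ∧
      -- eigenvectors
      ∃ ν μ : Λ → ℝ, (∀ x, 0 < ν x) ∧ (∀ x, 0 < μ x) ∧
        (∀ y, HasSum (fun x => ν x * P x y) (R * ν y)) ∧
        (∀ x, HasSum (fun y => P x y * μ y) (R * μ x)) ∧
        Summable ν ∧
        ∃ c₁ C₁ : ℝ, 0 < c₁ ∧ (∀ x, c₁ ≤ μ x) ∧ (∀ x, μ x ≤ C₁) := by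
  have := nonempty_of_iSup_lt_tsum hδc
  change ⨆ x, (1 - ∑' y, P x y) < ∑' z, colInf P z at hδc
  obtain ⟨x₀⟩ := ‹Nonempty Λ›
  have hp0 := colInf_nonneg hP0
  have hpP := colInf_le hP0
  have hp : Summable (colInf P) := (hPsum x₀).of_nonneg_of_le hp0 (hpP x₀)
  have hs := one_sub_iSup_one_sub_le (f := fun x => ∑' y, P x y) fun x => tsum_nonneg (hP0 x)
  obtain ⟨z, hz⟩ := exists_pos_of_tsum_pos (by linarith [hs x₀, hP1 x₀] : 0 < ∑' z, colInf P z)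
  obtain ⟨R, hR, hR1, μ, ν, hμ, hμ1, ⟨C, hμC⟩, hν, hνsum, hνp⟩ :=
    exists_eigenvectors_of_minorant hPsum hP1 hs hp0 hpP hp (by linarith)
  have hL := exists_tendsto_matPow_div_pow hP0 hR hμ one_pos hμ1 hμC hp0 hpP hp hz
    fun y => (hirr z y).imp fun _ h => h.2
  refine ⟨fun x _ hd => ?_, R, hR, hR1, fun x => ?_, hL, ν, μ, fun y => ?_,
    fun x => one_pos.trans_le (hμ1 x), hν, hμ, hνsum, 1, C, one_pos, hμ1, hμC⟩
  · obtain ⟨L, hL0, hL⟩ := hL x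
    exact eq_one_of_dvd_of_tendsto_div_pow hR hL0 hL hd
  · obtain ⟨L, hL0, hL⟩ := hL x
    exact tendsto_rpow_inv_of_tendsto_div_pow (fun n => matPow_nonneg hP0 n x x) hR hL0 hL
  · obtain ⟨n, -, hn⟩ := hirr z y
    exact pos_of_subinvariant_of_matPow_pos hP0
      (fun y => (div_nonneg (hp0 y) hR.le).trans (hνp y)) hR.le (fun y => (hν y).summable)
      (fun y => (hν y).tsum_eq.le) ((div_pos hz hR).trans_le (hνp z)) hn

/-- Theorem 2.3, discrete skeleton form: the Doeblin-type condition
`δ := Σ_z inf_x P(x,z) > c := sup_x (1 − Σ_y P(x,y))` implies aperiodicity and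
$R$-positivity, with a summable left eigenvector and a right eigenvector bounded above
and bounded away from `0`. -/
theorem doeblin_implies_R_positivity
    {Λ : Type*} [Countable Λ] [Infinite Λ] [DecidableEq Λ]
    (P : Λ → Λ → ℝ)
    -- substochastic
    (hP0 : ∀ x y, 0 ≤ P x y)
    (hPsum : ∀ x, Summable (P x))
    (hP1 : ∀ x, ∑' y, P x y ≤ 1)
    -- irreducible
    (hirr : ∀ x y, ∃ n, 1 ≤ n ∧ 0 < matPow P n x y)
    -- the Doeblin condition δ > c
    (hδc : (⨆ x, (1 - ∑' y, P x y)) < ∑' z, ⨅ x, P x z) :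
    -- aperiodicity: gcd of return times is 1
    (∀ x, ∀ d : ℕ, (∀ n, 1 ≤ n → 0 < matPow P n x x → d ∣ n) → d = 1) ∧
    ∃ R : ℝ, 0 < R ∧ R ≤ 1 ∧
      -- R is the decay parameter
      (∀ x, Tendsto (fun n : ℕ => (matPow P n x x) ^ ((n : ℝ)⁻¹)) atTop (𝓝 R)) ∧
      -- R-positivity: lim R^{-n} P^n(x,x) exists and is positive
      (∀ x, ∃ L : ℝ, 0 < L ∧
        Tendsto (fun n : ℕ => matPow P n x x / R ^ n) atTop (𝓝 L)) ∧
      -- eigenvectors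
      ∃ ν μ : Λ → ℝ, (∀ x, 0 < ν x) ∧ (∀ x, 0 < μ x) ∧
        (∀ y, HasSum (fun x => ν x * P x y) (R * ν y)) ∧
        (∀ x, HasSum (fun y => P x y * μ y) (R * μ x)) ∧
        Summable ν ∧
        ∃ c₁ C₁ : ℝ, 0 < c₁ ∧ (∀ x, c₁ ≤ μ x) ∧ (∀ x, μ x ≤ C₁) :=
  doeblin_implies_R_positivity_general P hP0 hPsum hP1 hirr hδc
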